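/- arXiv:math/0511735 — 7 statements merged into one kernel-verified Lean document; each statement's English description precedes it below -/
import Mathlib

section
/- Let R be a commutative ring, n ≥ 2, and let x_{ab} ∈ R for distinct a,b ∈ {1,…,n} satisfy x_{ab} = x_{ba}. Let M be the (n−1)×(n−1) matrix with rows and columns indexed by {2,…,n}, with diagonal entries M_{bb} = Σ_{j ∈ {1,…,n}, j ≠ b} x_{jb} and off-diagonal entries M_{bc} = −x_{bc} for b ≠ c. Then det(M) = Σ_{t ∈ T_{{1,…,n}}} ∏_{{a,b} ∈ t} x_{ab}. -/
open Finset

/-- A finset of unordered pairs on `Fin n` is a tree if no edge is a loop and the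
associated simple graph is connected and acyclic. -/
def IsTreeOn (n : ℕ) (t : Finset (Sym2 (Fin n))) : Prop :=
  (∀ e ∈ t, ¬ e.IsDiag) ∧ (SimpleGraph.fromEdgeSet (t : Set (Sym2 (Fin n)))).IsTree

/-- The inclusion of `{2,…,n}` (as `Fin (n-1)`) into `{1,…,n}` (as `Fin n`). -/
def emb1 (n : ℕ) (i : Fin (n - 1)) : Fin n := ⟨i + 1, by omega⟩

/-- The matrix `M` of the weighted matrix-tree theorem, with rows and columns indexed by
`{2,…,n}`: diagonal entries `Σ_{j ≠ b} x_{jb}`, off-diagonal entries `-x_{bc}`. -/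
def kirchhoff (R : Type*) [CommRing R] (n : ℕ) (x : Fin n → Fin n → R) :
    Matrix (Fin (n - 1)) (Fin (n - 1)) R :=
  Matrix.of fun i j =>
    if i = j then ∑ q ∈ Finset.univ.erase (emb1 n i), x q (emb1 n i)
    else - x (emb1 n i) (emb1 n j)

/-!
Expanding each row of `M` by multilinearity gives `det M = Σ_f (Π_b x_{f b, b}) det (1 - A_f)`,
summed over the maps `f` that choose a parent `f b ≠ b` for every vertex `b ≠ 1`, where `A_f` is
the `0/1` matrix of `f`. If iterating `f` always leads to the root `1`, then `A_f` is strictly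
triangular for the order by distance to the root and `det (1 - A_f) = 1`. Otherwise the indicator
of the vertices that never reach the root lies in the kernel of `1 - A_f`, so `det (1 - A_f) = 0`.
The surviving parent maps correspond bijectively to trees via `f ↦ {{b, f b}}`; the inverse
orients every edge of a tree towards the root.
-/

open Matrix

lemma Matrix.det_eq_zero_of_mulVec_eq_zero {n R : Type*} [Fintype n] [DecidableEq n]
    [CommRing R] {M : Matrix n n R} {c : n → R} {i : n} (hc : c i = 1) (h : M *ᵥ c = 0) :
    M.det = 0 := by
  have : M.det • c = 0 := by
    rw [← one_mulVec c, ← smul_mulVec, ← adjugate_mul, ← mulVec_mulVec, h, mulVec_zero]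
  simpa [hc] using congrFun this i

lemma SimpleGraph.Connected.exists_adj_dist_lt {V : Type*} {G : SimpleGraph V}
    (hG : G.Connected) {u v : V} (huv : u ≠ v) :
    ∃ w, G.Adj u w ∧ G.dist w v < G.dist u v := by
  obtain ⟨p, hp⟩ := hG.exists_walk_length_eq_dist u v
  cases p with
  | nil => exact absurd rfl huv
  | cons h q => exact ⟨_, h, hp ▸ (SimpleGraph.dist_le q).trans_lt (by simp)⟩

lemma SimpleGraph.isTree_fromEdgeSet_iff {V : Type*} [Fintype V] {t : Finset (Sym2 V)}
    (ht : ∀ e ∈ t, ¬e.IsDiag) :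
    (SimpleGraph.fromEdgeSet (t : Set (Sym2 V))).IsTree ↔
      (SimpleGraph.fromEdgeSet (t : Set (Sym2 V))).Connected ∧ #t + 1 = Fintype.card V := by
  have : (SimpleGraph.fromEdgeSet (t : Set (Sym2 V))).edgeSet = t := by
    rw [SimpleGraph.edgeSet_fromEdgeSet, sdiff_eq_left, Set.disjoint_left]
    exact fun e he hd => ht e he hd
  rw [SimpleGraph.isTree_iff_connected_and_card, this, Nat.card_coe_set_eq, Set.ncard_coe_finset,
    Nat.card_eq_fintype_card]

namespace MatrixTree

section ParentMap

variable {V : Type*} [DecidableEq V] {r : V} (f : {v // v ≠ r} → V)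

def rootStep (v : V) : V := if h : v = r then r else f ⟨v, h⟩

def ReachesRoot (v : V) : Prop := ∃ k, (rootStep f)^[k] v = r

variable {f}

lemma rootStep_coe (i : {v // v ≠ r}) : rootStep f i = f i := by simp [rootStep, i.2]

lemma reachesRoot_root : ReachesRoot f r := ⟨0, rfl⟩

lemma reachesRoot_apply_iff (i : {v // v ≠ r}) : ReachesRoot f (f i) ↔ ReachesRoot f i := by
  constructor
  · rintro ⟨k, hk⟩
    exact ⟨k + 1, by rwa [Function.iterate_succ_apply, rootStep_coe]⟩
  · rintro ⟨_ | k, hk⟩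
    · exact absurd hk i.2
    · exact ⟨k, by rwa [Function.iterate_succ_apply, rootStep_coe] at hk⟩

lemma reachesRoot_of_lt (μ : V → ℕ) (hμ : ∀ i, μ (f i) < μ i) (v : V) : ReachesRoot f v :=
  (measure μ).wf.induction v fun v ih => by
    by_cases hv : v = r
    · exact ⟨0, hv⟩
    · exact (reachesRoot_apply_iff ⟨v, hv⟩).1 (ih _ (hμ _))

noncomputable def depth (hf : ∀ v, ReachesRoot f v) (v : V) : ℕ := Nat.find (hf v)

lemma depth_apply_lt (hf : ∀ v, ReachesRoot f v) (i : {v // v ≠ r}) :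
    depth hf (f i) < depth hf i := by
  obtain ⟨k, hk⟩ : ∃ k, depth hf i = k + 1 :=
    Nat.exists_eq_succ_of_ne_zero fun h => i.2 ((Nat.find_eq_zero _).1 h)
  have hk' : (rootStep f)^[k] (f i) = r := by
    have h := Nat.find_spec (hf i)
    rwa [← depth, hk, Function.iterate_succ_apply, rootStep_coe] at h
  exact hk ▸ Nat.lt_succ_of_le (Nat.find_min' _ hk')

lemma apply_ne (hf : ∀ v, ReachesRoot f v) (i : {v // v ≠ r}) : f i ≠ i := fun h =>
  (h ▸ depth_apply_lt hf i).false

lemma apply_apply_ne (hf : ∀ v, ReachesRoot f v) {i j : {v // v ≠ r}} (hij : f i = j) :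
    f j ≠ i := fun hji =>
  (depth_apply_lt hf i).not_gt (hij ▸ hji ▸ depth_apply_lt hf j)

lemma parentEdge_injective (hf : ∀ v, ReachesRoot f v) :
    Function.Injective fun i : {v // v ≠ r} => s((i : V), f i) := by
  intro i j h
  rcases Sym2.eq_iff.1 h with ⟨hij, -⟩ | ⟨hij, hji⟩
  · exact Subtype.ext hij
  · exact absurd hij.symm (apply_apply_ne hf hji)

end ParentMap

section Determinant

variable {V R : Type*} [DecidableEq V] [CommRing R]

/-- `x q v` is the weight of choosing `q` as the parent of `v`; for symmetric `x` and `V = Fin n`,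
`r = 0`, this is `kirchhoff`. -/
def reducedLaplacian [Fintype V] (x : V → V → R) (r : V) :
    Matrix {v // v ≠ r} {v // v ≠ r} R :=
  of fun i j => if i = j then ∑ q ∈ univ.erase (i : V), x q i else -x j i

def parentMatrix {r : V} (f : {v // v ≠ r} → V) : Matrix {v // v ≠ r} {v // v ≠ r} R :=
  of fun i j => if f i = j then 1 else 0

theorem det_reducedLaplacian_eq_sum_parentMatrix [Fintype V] (x : V → V → R) (r : V) :
    (reducedLaplacian x r).det =
      ∑ f ∈ Fintype.piFinset fun i : {v // v ≠ r} => univ.erase (i : V),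
        (∏ i : {v // v ≠ r}, x (f i) i) * (1 - parentMatrix (R := R) f).det := by
  -- row `i` of `1 - parentMatrix f` only depends on `f i`
  let row (i : {v // v ≠ r}) (q : V) : {v // v ≠ r} → R :=
    x q i • (1 - parentMatrix (R := R) fun _ : {v // v ≠ r} => q) i
  have hrows : reducedLaplacian x r =
      fun i : {v // v ≠ r} => ∑ q ∈ univ.erase (i : V), row i q := by
    ext i j
    by_cases hij : i = j
    · subst hij
      simp only [reducedLaplacian, of_apply, if_true, Finset.sum_apply]
      refine sum_congr rfl fun q hq => ?_
      simp [row, parentMatrix, ne_of_mem_erase hq]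
    · simp [reducedLaplacian, row, parentMatrix, hij, Finset.sum_apply, eq_comm, Subtype.coe_inj]
  rw [hrows]
  refine ((detRowAlternating (n := {v // v ≠ r}) (R := R)).toMultilinearMap.map_sum_finset
    row _).trans (sum_congr rfl fun f _ => ?_)
  rw [← det_mul_column]
  rfl

variable [Fintype V] {r : V} {f : {v // v ≠ r} → V}

lemma det_one_sub_parentMatrix_of_reachesRoot (hf : ∀ v, ReachesRoot f v) :
    (1 - parentMatrix (R := R) f).det = 1 := by
  let b (i : {v // v ≠ r}) : ℕᵒᵈ := OrderDual.toDual (depth hf i)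
  have hfb {i j : {v // v ≠ r}} (hij : b j ≤ b i) : f i ≠ j := fun h =>
    (h ▸ depth_apply_lt hf i).not_ge hij
  have hb : (1 - parentMatrix (R := R) f).BlockTriangular b := by
    intro i j hij
    have hne : i ≠ j := by rintro rfl; exact lt_irrefl _ hij
    simp [parentMatrix, hne, hfb hij.le]
  rw [hb.det]
  refine prod_eq_one fun d _ => ?_
  have hblock : (1 - parentMatrix (R := R) f).toSquareBlock b d = 1 := by
    ext ⟨i, hi⟩ ⟨j, hj⟩
    simp [toSquareBlock_def, parentMatrix, one_apply, hfb (hj.trans hi.symm).le]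
  rw [hblock, det_one]

lemma parentMatrix_mulVec (g : V → R) (hg : g r = 0) :
    parentMatrix f *ᵥ (fun j => g j) = fun i => g (f i) := by
  ext i
  by_cases h : f i = r
  · simp only [mulVec, dotProduct, parentMatrix, of_apply, h, hg, boole_mul]
    exact sum_eq_zero fun j _ => if_neg (Ne.symm j.2)
  · rw [mulVec, dotProduct, Fintype.sum_eq_single ⟨f i, h⟩]
    · simp [parentMatrix]
    · intro j hj
      rw [parentMatrix, of_apply, if_neg fun e => hj (Subtype.ext e.symm), zero_mul]

lemma det_one_sub_parentMatrix_of_not_reachesRoot (hf : ¬∀ v, ReachesRoot f v) :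
    (1 - parentMatrix (R := R) f).det = 0 := by
  classical
  obtain ⟨v, hv⟩ := not_forall.1 hf
  let c (u : V) : R := if ReachesRoot f u then 0 else 1
  refine det_eq_zero_of_mulVec_eq_zero (c := fun i => c i)
    (i := ⟨v, by rintro rfl; exact hv reachesRoot_root⟩) (if_neg hv) ?_
  rw [sub_mulVec, one_mulVec, parentMatrix_mulVec c (if_pos reachesRoot_root), sub_eq_zero]
  ext i
  simp only [c, reachesRoot_apply_iff]

end Determinant

section Trees

variable {V : Type*} [Fintype V] [DecidableEq V]

def IsTreeEdgeSet (t : Finset (Sym2 V)) : Prop :=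
  (∀ e ∈ t, ¬e.IsDiag) ∧ (SimpleGraph.fromEdgeSet (t : Set (Sym2 V))).IsTree

variable {r : V} {f g : {v // v ≠ r} → V}

def parentTree (f : {v // v ≠ r} → V) : Finset (Sym2 V) :=
  univ.image fun i : {v // v ≠ r} => s((i : V), f i)

lemma card_parentTree (hf : ∀ v, ReachesRoot f v) : #(parentTree f) + 1 = Fintype.card V := by
  rw [parentTree, card_image_of_injective _ (parentEdge_injective hf), card_univ,
    Fintype.card_subtype_compl, Fintype.card_subtype_eq]
  have := Fintype.card_pos_iff.2 ⟨r⟩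
  omega

lemma reachable_root_parentTree (hf : ∀ v, ReachesRoot f v) (v : V) :
    (SimpleGraph.fromEdgeSet (parentTree f : Set (Sym2 V))).Reachable v r := by
  obtain ⟨k, hk⟩ := hf v
  induction k generalizing v with
  | zero => rw [show v = r from hk]
  | succ k ih =>
    by_cases hv : v = r
    · rw [hv]
    · have hadj : (SimpleGraph.fromEdgeSet (parentTree f : Set (Sym2 V))).Adj v (f ⟨v, hv⟩) :=
        (SimpleGraph.fromEdgeSet_adj _).2
          ⟨mem_image.2 ⟨⟨v, hv⟩, mem_univ _, rfl⟩, (apply_ne hf ⟨v, hv⟩).symm⟩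
      refine hadj.reachable.trans (ih _ ?_)
      rwa [Function.iterate_succ_apply, rootStep, dif_neg hv] at hk

lemma isTreeEdgeSet_parentTree (hf : ∀ v, ReachesRoot f v) : IsTreeEdgeSet (parentTree f) := by
  have hdiag : ∀ e ∈ parentTree f, ¬e.IsDiag := by
    simp only [parentTree, mem_image, mem_univ, true_and, forall_exists_index]
    rintro _ i rfl
    exact fun h => apply_ne hf i (Sym2.mk_isDiag_iff.1 h).symm
  refine ⟨hdiag, (SimpleGraph.isTree_fromEdgeSet_iff hdiag).2 ⟨?_, card_parentTree hf⟩⟩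
  have : Nonempty V := ⟨r⟩
  exact SimpleGraph.Connected.mk fun u v =>
    (reachable_root_parentTree hf u).trans (reachable_root_parentTree hf v).symm

lemma parentTree_injective (hf : ∀ v, ReachesRoot f v) (hg : ∀ v, ReachesRoot g v)
    (h : parentTree f = parentTree g) : f = g := by
  by_contra hne
  let D := univ.filter fun i => f i ≠ g i
  obtain ⟨i, hiD, hmax⟩ := D.exists_max_image (depth hf ·) <| by
    obtain ⟨i, hi⟩ := Function.ne_iff.1 hne
    exact ⟨i, mem_filter.2 ⟨mem_univ _, hi⟩⟩
  have hgi : s((i : V), g i) ∈ parentTree f := h ▸ mem_image.2 ⟨i, mem_univ _, rfl⟩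
  obtain ⟨j, -, hj⟩ := mem_image.1 hgi
  rcases Sym2.eq_iff.1 hj with ⟨hji, hfj⟩ | ⟨hji, hfj⟩
  · exact (mem_filter.1 hiD).2 (Subtype.ext hji ▸ hfj)
  · -- `f j = i` makes `j` deeper than `i`, so `g j = f j = i` and `g i = j`: a 2-cycle of `g`
    have hjD : j ∉ D := fun hjD => (hmax j hjD).not_gt (hfj ▸ depth_apply_lt hf j)
    have hgj : g j = i := by
      simp only [D, mem_filter, mem_univ, true_and, not_not] at hjD
      rw [← hjD, hfj]
    exact apply_apply_ne hg hji.symm hgj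

lemma exists_parentTree_eq {t : Finset (Sym2 V)} (ht : IsTreeEdgeSet t) (r : V) :
    ∃ f : {v // v ≠ r} → V, (∀ v, ReachesRoot f v) ∧ parentTree f = t := by
  set G := SimpleGraph.fromEdgeSet (t : Set (Sym2 V))
  have hG := (SimpleGraph.isTree_fromEdgeSet_iff ht.1).1 ht.2
  choose f hadj hdist using fun i : {v // v ≠ r} => hG.1.exists_adj_dist_lt i.2
  have hf := reachesRoot_of_lt (G.dist · r) hdist
  refine ⟨f, hf, eq_of_subset_of_card_le ?_ ?_⟩
  · simp only [parentTree, image_subset_iff, mem_univ, forall_const]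
    exact fun i => ((SimpleGraph.fromEdgeSet_adj _).1 (hadj i)).1
  · have := card_parentTree hf
    omega

lemma prod_parentTree {M : Type*} [CommMonoid M] (x : V → V → M) (hx : ∀ a b, x a b = x b a)
    (hf : ∀ v, ReachesRoot f v) :
    ∏ e ∈ parentTree f, Sym2.lift ⟨x, hx⟩ e = ∏ i : {v // v ≠ r}, x (f i) i := by
  rw [parentTree, prod_image fun i _ j _ h => parentEdge_injective hf h]
  exact prod_congr rfl fun i _ => (Sym2.lift_mk _ _ _).trans (hx _ _)

end Trees

variable {V R : Type*} [Fintype V] [DecidableEq V] [CommRing R]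

open scoped Classical in
theorem det_reducedLaplacian_eq_sum_reachesRoot (x : V → V → R) (r : V) :
    (reducedLaplacian x r).det =
      ∑ f ∈ (Fintype.piFinset fun i : {v // v ≠ r} => univ.erase (i : V)).filter
          (fun f => ∀ v, ReachesRoot f v), ∏ i : {v // v ≠ r}, x (f i) i := by
  rw [det_reducedLaplacian_eq_sum_parentMatrix, sum_filter]
  refine sum_congr rfl fun f _ => ?_
  split_ifs with hf
  · rw [det_one_sub_parentMatrix_of_reachesRoot hf, mul_one]
  · rw [det_one_sub_parentMatrix_of_not_reachesRoot hf, mul_zero]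

open scoped Classical in
theorem det_reducedLaplacian_eq_sum_trees (x : V → V → R) (hx : ∀ a b, x a b = x b a)
    (r : V) :
    (reducedLaplacian x r).det =
      ∑ t ∈ univ.filter (IsTreeEdgeSet (V := V)), ∏ e ∈ t, Sym2.lift ⟨x, hx⟩ e := by
  rw [det_reducedLaplacian_eq_sum_reachesRoot]
  refine sum_bij (fun f _ => parentTree f) ?_ ?_ ?_ ?_
  · intro f hf
    exact mem_filter.2 ⟨mem_univ _, isTreeEdgeSet_parentTree (mem_filter.1 hf).2⟩
  · intro f hf g hg h
    exact parentTree_injective (mem_filter.1 hf).2 (mem_filter.1 hg).2 h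
  · intro t ht
    obtain ⟨f, hf, rfl⟩ := exists_parentTree_eq (mem_filter.1 ht).2 r
    refine ⟨f, mem_filter.2 ⟨?_, hf⟩, rfl⟩
    exact Fintype.mem_piFinset.2 fun i => mem_erase.2 ⟨apply_ne hf i, mem_univ _⟩
  · intro f hf
    exact (prod_parentTree x hx (mem_filter.1 hf).2).symm

end MatrixTree

open scoped Classical in
/-- Weighted matrix-tree theorem: `det M = Σ_{t ∈ T_{[n]}} Π_{{a,b} ∈ t} x_{ab}`. -/
theorem det_kirchhoff_eq_sum_trees (R : Type*) [CommRing R] (n : ℕ) (hn : 2 ≤ n)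
    (x : Fin n → Fin n → R) (hx : ∀ a b, x a b = x b a) :
    (kirchhoff R n x).det =
      ∑ t ∈ Finset.univ.filter (IsTreeOn n), ∏ e ∈ t, Sym2.lift ⟨x, hx⟩ e := by
  obtain ⟨m, rfl⟩ : ∃ m, n = m + 1 := ⟨n - 1, by omega⟩
  have hM : kirchhoff R (m + 1) x =
      (MatrixTree.reducedLaplacian x 0).submatrix (finSuccAboveEquiv 0) (finSuccAboveEquiv 0) := by
    ext i j
    have hemb (k : Fin m) : emb1 (m + 1) k = Fin.succAbove 0 k := rfl
    simp [kirchhoff, MatrixTree.reducedLaplacian, finSuccAboveEquiv_apply, hemb, hx]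
  rw [hM, det_submatrix_equiv_self, MatrixTree.det_reducedLaplacian_eq_sum_trees x hx]
  rfl
end

section
/- If Ω satisfies Condition (*), then the greatest common divisor, taken over all trees t on the vertex set {1,…,k+2}, of the products ∏_{{p,q} ∈ t} |Δ_{pq}|, equals 1. -/
open Finset

/-- Determinant of the submatrix of `Ω` obtained by deleting the rows in `s`. -/
noncomputable def minorDet (k : ℕ) (Ω : Matrix (Fin (k + 2)) (Fin k) ℤ)
    (s : Finset (Fin (k + 2))) : ℤ :=
  if h : sᶜ.card = k then (Ω.submatrix (sᶜ.orderEmbOfFin h) id).det else 0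

/-- `Δ_{pq}`: determinant of `Ω` with rows `p` and `q` deleted. -/
noncomputable def Delta (k : ℕ) (Ω : Matrix (Fin (k + 2)) (Fin k) ℤ) (p q : Fin (k + 2)) : ℤ :=
  minorDet k Ω {p, q}

theorem Delta_symm (k : ℕ) (Ω : Matrix (Fin (k + 2)) (Fin k) ℤ) (p q : Fin (k + 2)) :
    Delta k Ω p q = Delta k Ω q p := by
  unfold Delta; rw [Finset.pair_comm]

/-- Condition (*). -/
def CondStar (k : ℕ) (Ω : Matrix (Fin (k + 2)) (Fin k) ℤ) : Prop :=
  (∀ p q : Fin (k + 2), p ≠ q → Delta k Ω p q ≠ 0) ∧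
  (∀ p : Fin (k + 2), (Finset.univ.erase p).gcd (fun q => (Delta k Ω p q).natAbs) = 1)

/-- The sign `ε^p_q`. -/
noncomputable def eps (k : ℕ) (Ω : Matrix (Fin (k + 2)) (Fin k) ℤ) (p q : Fin (k + 2)) : ℤ :=
  (-1) ^ ((p : ℕ) + (q : ℕ)) * Int.sign ((p : ℤ) - (q : ℤ)) * Int.sign (Delta k Ω p q)

/-- `v_p = Σ_i Ω_{pi} x_i`. -/
noncomputable def vP (k : ℕ) (Ω : Matrix (Fin (k + 2)) (Fin k) ℤ) (p : Fin (k + 2)) :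
    MvPolynomial (Fin k) ℤ :=
  ∑ i : Fin k, MvPolynomial.C (Ω p i) * MvPolynomial.X i

open scoped Classical in
/-- `Σ_{t tree on [k+2]} Π_{{p,q} ∈ t} |Δ_{pq}|`. -/
noncomputable def treeSum (k : ℕ) (Ω : Matrix (Fin (k + 2)) (Fin k) ℤ) : ℕ :=
  ∑ t ∈ Finset.univ.filter (IsTreeOn (k + 2)),
    ∏ e ∈ t, Sym2.lift ⟨fun p q => (Delta k Ω p q).natAbs,
      fun p q => by simp only [Delta_symm]⟩ e

/-! Suppose a prime `ℓ` divides every tree product, and call `p, q` adjacent when `ℓ ∤ Δ_{pq}`.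
By (2) every vertex has a neighbour. Up to sign `Δ_{pq} = det [e_p | e_q | Ω]`, and the alternating
form `det [u | v | Ω]` satisfies the Plücker relation
`Δ_{ab} Δ_{cd} = ±Δ_{cb} Δ_{ad} ± Δ_{ac} Δ_{bd}`. So if `p ~ p'` and `q ~ q'`, then
`ℓ ∤ Δ_{pp'} Δ_{qq'}` forces `p ~ q` or `p ~ q' ~ q`: the graph is connected, and any spanning tree
has a product prime to `ℓ`. -/

open Matrix

section Wedge

variable {R : Type*}

def consCol {ι : Type*} {m : ℕ} (u : ι → R) (A : Matrix ι (Fin m) R) : Matrix ι (Fin (m + 1)) R :=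
  of fun i => Fin.cons (u i) (A i)

lemma consCol_submatrix {ι κ : Type*} {m : ℕ} (u : ι → R) (A : Matrix ι (Fin m) R) (f : κ → ι) :
    (consCol u A).submatrix f id = consCol (u ∘ f) (A.submatrix f id) :=
  rfl

lemma det_consCol_single [CommRing R] {m : ℕ} (A : Matrix (Fin (m + 1)) (Fin m) R)
    (a : Fin (m + 1)) :
    (consCol (Pi.single a 1) A).det = (-1) ^ (a : ℕ) * (A.submatrix a.succAbove id).det := by
  rw [det_succ_column_zero, Fintype.sum_eq_single a fun p hp => by simp [consCol, hp]]
  simp only [consCol, of_apply, Fin.cons_zero, Pi.single_eq_same, mul_one]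
  rfl

variable {n : ℕ} (Ω : Matrix (Fin (n + 2)) (Fin n) R)

def bordered (u v : Fin (n + 2) → R) : Matrix (Fin (n + 2)) (Fin (n + 2)) R :=
  consCol u (consCol v Ω)

lemma bordered_updateCol_zero (u v w : Fin (n + 2) → R) :
    (bordered Ω u v).updateCol 0 w = bordered Ω w v := by
  ext p j
  cases j using Fin.cases <;> simp [bordered, consCol]

lemma bordered_updateCol_one (u v w : Fin (n + 2) → R) :
    (bordered Ω u v).updateCol 1 w = bordered Ω u w := by
  ext p j
  cases j using Fin.cases with
  | zero => simp [bordered, consCol]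
  | succ j => cases j using Fin.cases <;> simp [bordered, consCol, Fin.succ_succ_ne_one]

variable [CommRing R]

def wedge (u v : Fin (n + 2) → R) : R :=
  (bordered Ω u v).det

lemma wedge_self (u : Fin (n + 2) → R) : wedge Ω u u = 0 :=
  det_zero_of_column_eq (i := 0) (j := 1) (by simp) fun p => by simp [bordered, consCol]

lemma wedge_column_left (i : Fin n) (v : Fin (n + 2) → R) : wedge Ω (fun p => Ω p i) v = 0 :=
  det_zero_of_column_eq (i := 0) (j := i.succ.succ) (Fin.succ_ne_zero _).symm fun p => by
    simp [bordered, consCol]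

lemma wedge_eq_det_updateCol (u v : Fin (n + 2) → R) :
    wedge Ω u v = ((bordered Ω 0 v).updateCol 0 u).det := by
  rw [bordered_updateCol_zero, wedge]

def wedgeLeft (v : Fin (n + 2) → R) : (Fin (n + 2) → R) →ₗ[R] R where
  toFun u := wedge Ω u v
  map_add' u u' := by simp only [wedge_eq_det_updateCol Ω _ v, det_updateCol_add]
  map_smul' c u := by
    simp only [wedge_eq_det_updateCol Ω _ v, det_updateCol_smul, smul_eq_mul, RingHom.id_apply]

lemma wedgeLeft_apply (u v : Fin (n + 2) → R) : wedgeLeft Ω v u = wedge Ω u v := rfl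

/-- By Cramer's rule `wedge Ω u v • w` is a combination of the columns of `bordered Ω u v` with
coefficients `wedge Ω w v`, `wedge Ω u w`, …; apply the linear form `wedge Ω · x`, which kills the
columns of `Ω`. -/
theorem wedge_mul_wedge (u v w x : Fin (n + 2) → R) :
    wedge Ω u v * wedge Ω w x = wedge Ω w v * wedge Ω u x + wedge Ω u w * wedge Ω v x := by
  have hcramer :
      wedge Ω u v • w = ∑ j, cramer (bordered Ω u v) w j • fun p => bordered Ω u v p j := by
    rw [wedge, ← mulVec_cramer]
    ext p
    simp [mulVec, dotProduct, mul_comm]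
  have h0 : cramer (bordered Ω u v) w 0 = wedge Ω w v := by
    rw [cramer_apply, bordered_updateCol_zero, wedge]
  have h1 : cramer (bordered Ω u v) w 1 = wedge Ω u w := by
    rw [cramer_apply, bordered_updateCol_one, wedge]
  have h := congrArg (wedgeLeft Ω x) hcramer
  rw [map_smul, map_sum] at h
  simp only [map_smul, Fin.sum_univ_succ, Fin.succ_zero_eq_one, smul_eq_mul, wedgeLeft_apply,
    h0, h1] at h
  simpa [bordered, consCol, wedge_column_left] using h

lemma wedge_single_single_succAbove (p : Fin (n + 2)) (q : Fin (n + 1)) :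
    wedge Ω (Pi.single p 1) (Pi.single (p.succAbove q) 1)
      = (-1) ^ ((p : ℕ) + q) * (Ω.submatrix (p.succAbove ∘ q.succAbove) id).det := by
  have hsingle :
      (Pi.single (p.succAbove q) 1 : Fin (n + 2) → R) ∘ p.succAbove = Pi.single q 1 := by
    funext r
    simp [Pi.single_apply]
  rw [wedge, bordered, det_consCol_single, consCol_submatrix, hsingle, det_consCol_single,
    submatrix_submatrix, pow_add, mul_assoc]
  rfl

end Wedge

section Delta

variable {k : ℕ} (Ω : Matrix (Fin (k + 2)) (Fin k) ℤ)

lemma Delta_self (p : Fin (k + 2)) : Delta k Ω p p = 0 := by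
  rw [Delta, minorDet, insert_eq_of_mem (mem_singleton_self p), dif_neg]
  rw [card_compl, card_singleton]
  simp

lemma Delta_succAbove (p : Fin (k + 2)) (q : Fin (k + 1)) :
    Delta k Ω p (p.succAbove q) = (Ω.submatrix (p.succAbove ∘ q.succAbove) id).det := by
  have hcard : ({p, p.succAbove q}ᶜ : Finset (Fin (k + 2))).card = k := by
    rw [card_compl, card_pair (Fin.succAbove_ne p q).symm]
    simp
  have hmem (r : Fin k) :
      p.succAbove (q.succAbove r) ∈ ({p, p.succAbove q}ᶜ : Finset (Fin (k + 2))) := by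
    simp [Fin.succAbove_ne]
  have hmono := (Fin.strictMono_succAbove p).comp (Fin.strictMono_succAbove q)
  rw [Delta, minorDet, dif_pos hcard, ← orderEmbOfFin_unique hcard hmem hmono]
  rfl

lemma natAbs_wedge_single (p q : Fin (k + 2)) :
    (wedge Ω (Pi.single p 1) (Pi.single q 1)).natAbs = (Delta k Ω p q).natAbs := by
  rcases eq_or_ne q p with rfl | hqp
  · rw [wedge_self, Delta_self]
  · obtain ⟨q, rfl⟩ := Fin.exists_succAbove_eq hqp
    rw [wedge_single_single_succAbove, Delta_succAbove, Int.natAbs_mul, Int.natAbs_pow,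
      Int.natAbs_neg, Int.natAbs_one, one_pow, one_mul]

def coprimeGraph (ℓ : ℕ) : SimpleGraph (Fin (k + 2)) where
  Adj p q := ¬ ℓ ∣ (Delta k Ω p q).natAbs
  symm := ⟨fun p q h => by rwa [Delta_symm]⟩
  loopless := ⟨fun p => by simp [Delta_self]⟩

variable {Ω}

lemma coprimeGraph_exists_adj {ℓ : ℕ} {p : Fin (k + 2)} (hℓ : ℓ ≠ 1)
    (hgcd : (univ.erase p).gcd (fun q => (Delta k Ω p q).natAbs) = 1) :
    ∃ q, (coprimeGraph Ω ℓ).Adj p q := by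
  by_contra! h
  exact hℓ (Nat.dvd_one.1 (hgcd ▸ Finset.dvd_gcd fun q _ => not_not.1 (h q)))

lemma coprimeGraph_adj_iff {ℓ : ℕ} {p q : Fin (k + 2)} :
    (coprimeGraph Ω ℓ).Adj p q ↔ ¬ (ℓ : ℤ) ∣ wedge Ω (Pi.single p 1) (Pi.single q 1) := by
  rw [Int.natCast_dvd, natAbs_wedge_single]
  rfl

lemma coprimeGraph_connected {ℓ : ℕ} (hℓ : ℓ.Prime)
    (hgcd : ∀ p, (univ.erase p).gcd (fun q => (Delta k Ω p q).natAbs) = 1) :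
    (coprimeGraph Ω ℓ).Connected := by
  refine ⟨fun p q => ?_⟩
  obtain ⟨p', hp'⟩ := coprimeGraph_exists_adj hℓ.ne_one (hgcd p)
  obtain ⟨q', hq'⟩ := coprimeGraph_exists_adj hℓ.ne_one (hgcd q)
  by_cases hpq : (coprimeGraph Ω ℓ).Adj p q
  · exact hpq.reachable
  have hpq' : (coprimeGraph Ω ℓ).Adj p q' := by
    rw [coprimeGraph_adj_iff] at hp' hq' hpq ⊢
    rw [not_not] at hpq
    intro hpq'
    apply (Nat.prime_iff_prime_int.1 hℓ).not_dvd_mul hp' hq'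
    rw [wedge_mul_wedge]
    exact dvd_add (dvd_mul_of_dvd_right hpq' _) (dvd_mul_of_dvd_left hpq _)
  exact hpq'.reachable.trans hq'.symm.reachable

lemma isTreeOn_edgeFinset {n : ℕ} {T : SimpleGraph (Fin n)} [Fintype T.edgeSet]
    (hT : T.IsTree) :
    IsTreeOn n T.edgeFinset :=
  ⟨fun _ he => T.not_isDiag_of_mem_edgeSet (SimpleGraph.mem_edgeFinset.1 he), by simpa using hT⟩

open scoped Classical in
/-- If `Ω` satisfies Condition (*), the gcd over all trees `t` on `{1,…,k+2}` of the
products `Π_{{p,q} ∈ t} |Δ_{pq}|` equals `1`. -/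
theorem gcd_tree_products_eq_one (k : ℕ) (Ω : Matrix (Fin (k + 2)) (Fin k) ℤ)
    (hΩ : CondStar k Ω) :
    (Finset.univ.filter (IsTreeOn (k + 2))).gcd
      (fun t => ∏ e ∈ t, Sym2.lift ⟨fun p q => (Delta k Ω p q).natAbs,
        fun p q => by simp only [Delta_symm]⟩ e) = 1 := by
  by_contra hne
  obtain ⟨ℓ, hℓ, hℓ_dvd⟩ := Nat.exists_prime_and_dvd hne
  obtain ⟨T, hTG, hT⟩ := (coprimeGraph_connected hℓ hΩ.2).exists_isTree_le
  have htree : T.edgeFinset ∈ univ.filter (IsTreeOn (k + 2)) :=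
    mem_filter.2 ⟨mem_univ _, isTreeOn_edgeFinset hT⟩
  obtain ⟨e, he, hℓe⟩ := (hℓ.prime.dvd_finsetProd_iff _).1 (hℓ_dvd.trans (Finset.gcd_dvd htree))
  induction e using Sym2.ind with
  | _ p q => exact hTG (SimpleGraph.mem_edgeFinset.1 he) hℓe
end Delta
end

section
/- Suppose Ω satisfies Condition (*). If P is a prime and p,q,r ∈ {1,…,k+2} are distinct with P dividing Δ_{pq} and P dividing Δ_{qr}, then P divides Δ_{pr}. -/
open Finset

/-!
Reduce modulo `P`: `P ∣ Δ_{st}` exactly when some nonzero left-kernel vector `x` of `Ω`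
over `𝔽_P` (i.e. `x Ω = 0`) vanishes at `s` and `t`. Take such a `c` for `(p, q)` and `d`
for `(q, r)`. If `P ∤ Δ_{pr}`, then `d_p ≠ 0`, and for every `s` the kernel vector
`c_s d - d_s c` (or `c` itself when `c_s = 0`) is nonzero, as its `p`-entry is `c_s d_p`,
and vanishes at `q` and `s`. So `P` divides every `Δ_{qs}`, against the gcd condition.
-/

open Function Matrix

theorem Matrix.vecMul_eq_vecMul_submatrix_of_support {R m n : Type*}
    [NonUnitalNonAssocSemiring R] [Fintype m] [Fintype n] {e : n → m} (he : Injective e)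
    (M : Matrix m n R) {x : m → R} (hx : ∀ j ∉ Set.range e, x j = 0) :
    x ᵥ* M = (x ∘ e) ᵥ* M.submatrix e id := by
  funext c
  refine (Fintype.sum_of_injective e he _ _ (fun j hj => ?_) fun i => rfl).symm
  simp [hx j hj]

theorem Matrix.det_submatrix_eq_zero_iff {A m n : Type*} [CommRing A] [IsDomain A]
    [Fintype m] [Fintype n] [DecidableEq n] {e : n → m} (he : Injective e)
    (M : Matrix m n A) :
    (M.submatrix e id).det = 0 ↔
      ∃ x : m → A, x ≠ 0 ∧ x ᵥ* M = 0 ∧ ∀ j ∉ Set.range e, x j = 0 := by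
  rw [← exists_vecMul_eq_zero_iff]
  constructor
  · rintro ⟨v, hv, hvM⟩
    have hsupp : ∀ j ∉ Set.range e, extend e v 0 j = 0 := fun j hj =>
      extend_apply' _ _ _ (by simpa using hj)
    have hcomp : extend e v 0 ∘ e = v := funext (he.extend_apply v 0)
    refine ⟨extend e v 0, fun h => hv ?_, ?_, hsupp⟩
    · rw [← hcomp, h]; rfl
    · rw [vecMul_eq_vecMul_submatrix_of_support he M hsupp, hcomp, hvM]
  · rintro ⟨x, hx, hxM, hsupp⟩
    refine ⟨x ∘ e, fun h => hx (funext fun j => ?_), ?_⟩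
    · by_cases hj : j ∈ Set.range e
      · obtain ⟨i, rfl⟩ := hj
        exact congr_fun h i
      · exact hsupp j hj
    · rw [← vecMul_eq_vecMul_submatrix_of_support he M hsupp, hxM]

def Submodule.HasNonzeroVanishingAt {R m : Type*} [Semiring R] (K : Submodule R (m → R))
    (s t : m) : Prop :=
  ∃ x ∈ K, x ≠ 0 ∧ x s = 0 ∧ x t = 0

theorem Submodule.HasNonzeroVanishingAt.of_not_trans {R m : Type*} [CommRing R]
    [NoZeroDivisors R] {K : Submodule R (m → R)} {p q r : m}
    (hpq : K.HasNonzeroVanishingAt p q) (hqr : K.HasNonzeroVanishingAt q r)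
    (hpr : ¬K.HasNonzeroVanishingAt p r) (s : m) : K.HasNonzeroVanishingAt q s := by
  obtain ⟨c, hcK, hc, hcp, hcq⟩ := hpq
  obtain ⟨d, hdK, hd, hdq, hdr⟩ := hqr
  have hdp : d p ≠ 0 := fun h => hpr ⟨d, hdK, hd, h, hdr⟩
  by_cases hcs : c s = 0
  · exact ⟨c, hcK, hc, hcq, hcs⟩
  refine ⟨c s • d - d s • c, K.sub_mem (K.smul_mem _ hdK) (K.smul_mem _ hcK), fun h => ?_,
    by simp [hcq, hdq], by simp [mul_comm]⟩
  have hp : c s * d p = 0 := by simpa [hcp] using congr_fun h p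
  exact mul_ne_zero hcs hdp hp

theorem Delta_eq_det_submatrix (k : ℕ) (Ω : Matrix (Fin (k + 2)) (Fin k) ℤ) {p q : Fin (k + 2)}
    (hpq : p ≠ q) :
    ∃ e : Fin k → Fin (k + 2), Injective e ∧ Set.range e = {p, q}ᶜ ∧
      Delta k Ω p q = (Ω.submatrix e id).det := by
  have h : ({p, q}ᶜ : Finset _).card = k := by rw [card_compl, card_pair hpq]; simp
  refine ⟨_, (orderEmbOfFin _ h).injective, ?_, ?_⟩
  · rw [range_orderEmbOfFin, coe_compl, coe_pair]
  · rw [Delta, minorDet, dif_pos h]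

theorem dvd_Delta_iff_hasNonzeroVanishingAt (k : ℕ) (Ω : Matrix (Fin (k + 2)) (Fin k) ℤ)
    (P : ℤ) [Fact P.natAbs.Prime] {p q : Fin (k + 2)} (hpq : p ≠ q) :
    P ∣ Delta k Ω p q ↔ (LinearMap.ker
      (Ω.map (Int.cast : ℤ → ZMod P.natAbs)).vecMulLinear).HasNonzeroVanishingAt p q := by
  obtain ⟨e, he, hrange, hΔ⟩ := Delta_eq_det_submatrix k Ω hpq
  rw [← Int.natAbs_dvd, ← ZMod.intCast_zmod_eq_zero_iff_dvd, hΔ, Int.cast_det,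
    ← submatrix_map, det_submatrix_eq_zero_iff he, hrange]
  refine exists_congr fun x => ?_
  simp only [LinearMap.mem_ker, vecMulLinear_apply, Set.mem_compl_iff, Set.mem_insert_iff,
    Set.mem_singleton_iff, not_not]
  constructor
  · rintro ⟨hx, hxM, hxpq⟩
    exact ⟨hxM, hx, hxpq p (Or.inl rfl), hxpq q (Or.inr rfl)⟩
  · rintro ⟨hxM, hx, hxp, hxq⟩
    exact ⟨hx, hxM, by rintro j (rfl | rfl) <;> assumption⟩

theorem CondStar.exists_not_dvd_Delta {k : ℕ} {Ω : Matrix (Fin (k + 2)) (Fin k) ℤ}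
    (hΩ : CondStar k Ω) {P : ℤ} (hP : ¬IsUnit P) (p : Fin (k + 2)) :
    ∃ q ≠ p, ¬P ∣ Delta k Ω p q := by
  by_contra! h
  have : P.natAbs ∣ 1 := hΩ.2 p ▸ Finset.dvd_gcd fun q hq =>
    Int.natAbs_dvd_natAbs.mpr (h q (ne_of_mem_erase hq))
  exact hP (Int.isUnit_iff_natAbs_eq.mpr (Nat.dvd_one.mp this))

theorem prime_dvd_Delta_trans_general (k : ℕ) (Ω : Matrix (Fin (k + 2)) (Fin k) ℤ)
    (hΩ : CondStar k Ω) (P : ℤ) (hP : Prime P) (p q r : Fin (k + 2))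
    (hpq : p ≠ q) (hqr : q ≠ r) (hpr : p ≠ r)
    (h1 : P ∣ Delta k Ω p q) (h2 : P ∣ Delta k Ω q r) :
    P ∣ Delta k Ω p r := by
  have : Fact P.natAbs.Prime := ⟨Int.prime_iff_natAbs_prime.mp hP⟩
  by_contra h3
  obtain ⟨s, hsq, hs⟩ := hΩ.exists_not_dvd_Delta hP.not_isUnit q
  refine hs ((dvd_Delta_iff_hasNonzeroVanishingAt k Ω P hsq.symm).mpr ?_)
  exact .of_not_trans ((dvd_Delta_iff_hasNonzeroVanishingAt k Ω P hpq).mp h1)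
    ((dvd_Delta_iff_hasNonzeroVanishingAt k Ω P hqr).mp h2)
    (mt (dvd_Delta_iff_hasNonzeroVanishingAt k Ω P hpr).mpr h3) s

/-- If `P` is a prime dividing `Δ_{pq}` and `Δ_{qr}`, then `P` divides `Δ_{pr}`. -/
theorem prime_dvd_Delta_trans (k : ℕ) (hk : 2 ≤ k) (Ω : Matrix (Fin (k + 2)) (Fin k) ℤ)
    (hΩ : CondStar k Ω) (P : ℤ) (hP : Prime P) (p q r : Fin (k + 2))
    (hpq : p ≠ q) (hqr : q ≠ r) (hpr : p ≠ r)
    (h1 : P ∣ Delta k Ω p q) (h2 : P ∣ Delta k Ω q r) :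
    P ∣ Delta k Ω p r :=
  prime_dvd_Delta_trans_general k Ω hΩ P hP p q r hpq hqr hpr h1 h2
end

section
/- If Ω satisfies Condition (*), then the additive group of homogeneous degree-2 polynomials in ℤ[x_1,…,x_k] is spanned over ℤ by the products v_p·v_q with p,q ∈ {1,…,k+2}, p ≠ q. -/
open Finset

/-!
Cramer's rule for the `k × k` minor of `Ω` omitting rows `p` and `q` puts `Δ_{pq} • X i`, hence
`Δ_{pq} • v_r`, in the `ℤ`-span of the `v_t` with `t ∉ {p, q}`. As the `Δ_{pq}` (`q ≠ p`) are
coprime, every `X i` lies in the span of the `v_t`, so the `v_t` span the linear forms; likewise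
`v_p * v_p` lies in the span of the products `v_t * v_p` with `t ≠ p`. So the products `v_p * v_q`
with `p ≠ q` span all products of two linear forms, i.e. the quadratic forms.
-/

open MvPolynomial Submodule

theorem Matrix.det_smul_mem_span_sum_smul {R M n : Type*} [CommRing R] [AddCommGroup M]
    [Module R M] [Fintype n] [DecidableEq n] (A : Matrix n n R) (e : n → M) (i : n) :
    A.det • e i ∈ span R (Set.range fun r => ∑ j, A r j • e j) := by
  have h : A.det • e i = ∑ r, A.adjugate i r • ∑ j, A r j • e j := by
    simp_rw [Finset.smul_sum, smul_smul]
    rw [Finset.sum_comm]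
    simp_rw [← Finset.sum_smul, ← Matrix.mul_apply, Matrix.adjugate_mul, Matrix.smul_apply,
      Matrix.one_apply, smul_eq_mul, mul_ite, mul_one, mul_zero, ite_smul, zero_smul]
    simp
  rw [h]
  exact sum_mem fun r _ => smul_mem _ _ (subset_span ⟨r, rfl⟩)

theorem Submodule.mem_of_forall_smul_mem_of_gcd_natAbs_eq_one {N ι : Type*} [AddCommGroup N]
    {M : Submodule ℤ N} {x : N} (s : Finset ι) (f : ι → ℤ)
    (hs : s.gcd (fun i => (f i).natAbs) = 1) (h : ∀ i ∈ s, f i • x ∈ M) : x ∈ M := by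
  let I : Ideal ℤ := M.comap (LinearMap.toSpanSingleton ℤ N x)
  obtain ⟨g, hg⟩ := (inferInstance : I.IsPrincipal)
  have hgI : g • x ∈ M := show g ∈ I from hg ▸ mem_span_singleton_self g
  have hunit : g.natAbs = 1 := by
    rw [← Nat.dvd_one, ← hs]
    refine Finset.dvd_gcd fun i hi => Int.natAbs_dvd_natAbs.2 ?_
    have hfi : f i ∈ I := h i hi
    rw [hg] at hfi
    exact Ideal.mem_span_singleton.1 hfi
  rcases Int.natAbs_eq_iff.1 hunit with rfl | rfl
  · simpa using hgI
  · simpa using M.neg_mem hgI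

section

variable {k : ℕ} (Ω : Matrix (Fin (k + 2)) (Fin k) ℤ)

def offDiagonalProducts : Set (MvPolynomial (Fin k) ℤ) :=
  {f | ∃ p q : Fin (k + 2), p ≠ q ∧ f = vP k Ω p * vP k Ω q}

theorem vP_eq_sum_smul (p : Fin (k + 2)) : vP k Ω p = ∑ i, Ω p i • X i := by
  simp only [vP, smul_eq_C_mul]

theorem vP_isHomogeneous (p : Fin (k + 2)) : (vP k Ω p).IsHomogeneous 1 :=
  IsHomogeneous.sum _ _ _ fun i _ => by
    simpa using (isHomogeneous_C _ (Ω p i)).mul (isHomogeneous_X ℤ i)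

theorem Delta_smul_X_mem_span {p q : Fin (k + 2)} (hpq : p ≠ q) (i : Fin k) :
    Delta k Ω p q • X i ∈ span ℤ (vP k Ω '' {p, q}ᶜ) := by
  have hcard : ({p, q} : Finset (Fin (k + 2)))ᶜ.card = k := by
    rw [Finset.card_compl, Finset.card_pair hpq, Fintype.card_fin, Nat.add_sub_cancel]
  set e := ({p, q} : Finset (Fin (k + 2)))ᶜ.orderEmbOfFin hcard
  have hΔ : Delta k Ω p q = (Ω.submatrix e id).det := by
    rw [Delta, minorDet, dif_pos hcard]
  refine span_mono ?_ (hΔ ▸ (Ω.submatrix e id).det_smul_mem_span_sum_smul X i)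
  rintro _ ⟨r, rfl⟩
  refine ⟨e r, ?_, vP_eq_sum_smul Ω (e r)⟩
  rw [← Finset.coe_pair, ← Finset.coe_compl]
  exact Finset.orderEmbOfFin_mem _ hcard r

theorem Delta_smul_vP_mem_span {p q : Fin (k + 2)} (hpq : p ≠ q) (r : Fin (k + 2)) :
    Delta k Ω p q • vP k Ω r ∈ span ℤ (vP k Ω '' {p, q}ᶜ) := by
  rw [vP_eq_sum_smul, Finset.smul_sum]
  refine sum_mem fun i _ => ?_
  rw [smul_comm]
  exact smul_mem _ _ (Delta_smul_X_mem_span Ω hpq i)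

theorem span_range_vP_eq_homogeneousSubmodule_one (p : Fin (k + 2))
    (hp : (Finset.univ.erase p).gcd (fun q => (Delta k Ω p q).natAbs) = 1) :
    span ℤ (Set.range (vP k Ω)) = homogeneousSubmodule (Fin k) ℤ 1 := by
  refine le_antisymm (span_le.2 ?_) ?_
  · rintro _ ⟨q, rfl⟩
    exact vP_isHomogeneous Ω q
  · rw [homogeneousSubmodule_one_eq_span_X, span_le]
    rintro _ ⟨i, rfl⟩
    refine mem_of_forall_smul_mem_of_gcd_natAbs_eq_one _ _ hp fun q hq => ?_
    exact span_mono (Set.image_subset_range _ _)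
      (Delta_smul_X_mem_span Ω (Finset.ne_of_mem_erase hq).symm i)

theorem vP_mul_self_mem_span (p : Fin (k + 2))
    (hp : (Finset.univ.erase p).gcd (fun q => (Delta k Ω p q).natAbs) = 1) :
    vP k Ω p * vP k Ω p ∈ span ℤ (offDiagonalProducts Ω) := by
  refine mem_of_forall_smul_mem_of_gcd_natAbs_eq_one _ _ hp fun q hq => ?_
  have hpq : p ≠ q := (Finset.ne_of_mem_erase hq).symm
  have hprod : span ℤ (vP k Ω '' {p, q}ᶜ) * span ℤ {vP k Ω p} ≤
      span ℤ (offDiagonalProducts Ω) := by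
    rw [span_mul_span]
    refine span_mono ?_
    rintro _ ⟨_, ⟨t, ht, rfl⟩, _, rfl, rfl⟩
    exact ⟨t, p, fun h => ht (Or.inl h), rfl⟩
  rw [← smul_mul_assoc]
  exact hprod (mul_mem_mul (Delta_smul_vP_mem_span Ω hpq p) (mem_span_singleton_self _))

theorem vP_mul_vP_mem_span
    (hgcd : ∀ p, (Finset.univ.erase p).gcd (fun q => (Delta k Ω p q).natAbs) = 1)
    (p q : Fin (k + 2)) :
    vP k Ω p * vP k Ω q ∈ span ℤ (offDiagonalProducts Ω) := by
  rcases eq_or_ne p q with rfl | hpq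
  · exact vP_mul_self_mem_span Ω p (hgcd p)
  · exact subset_span ⟨p, q, hpq, rfl⟩

end

theorem span_vp_vq_eq_homogeneous_general (k : ℕ) (Ω : Matrix (Fin (k + 2)) (Fin k) ℤ)
    (hΩ : CondStar k Ω) :
    Submodule.span ℤ {f : MvPolynomial (Fin k) ℤ |
        ∃ p q : Fin (k + 2), p ≠ q ∧ f = vP k Ω p * vP k Ω q} =
      MvPolynomial.homogeneousSubmodule (Fin k) ℤ 2 := by
  change span ℤ (offDiagonalProducts Ω) = _
  rw [← homogeneousSubmodule_one_pow, ← span_range_vP_eq_homogeneousSubmodule_one Ω 0 (hΩ.2 0),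
    sq, span_mul_span]
  refine le_antisymm (span_mono ?_) (span_le.2 ?_)
  · rintro _ ⟨p, q, -, rfl⟩
    exact Set.mul_mem_mul ⟨p, rfl⟩ ⟨q, rfl⟩
  · rintro _ ⟨_, ⟨p, rfl⟩, _, ⟨q, rfl⟩, rfl⟩
    exact vP_mul_vP_mem_span Ω hΩ.2 p q

/-- The homogeneous degree-2 polynomials are spanned over `ℤ` by the products
`v_p · v_q` with `p ≠ q`. -/
theorem span_vp_vq_eq_homogeneous (k : ℕ) (hk : 2 ≤ k) (Ω : Matrix (Fin (k + 2)) (Fin k) ℤ)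
    (hΩ : CondStar k Ω) :
    Submodule.span ℤ {f : MvPolynomial (Fin k) ℤ |
        ∃ p q : Fin (k + 2), p ≠ q ∧ f = vP k Ω p * vP k Ω q} =
      MvPolynomial.homogeneousSubmodule (Fin k) ℤ 2 :=
  span_vp_vq_eq_homogeneous_general k Ω hΩ
end

section
/- Suppose Δ_{pq} ≠ 0 for all distinct p,q ∈ {1,…,k+2}. For each p, define w^p ∈ ℚ^{k+2} by w^p_p = 0 and w^p_q = (−1)^{p+q}·sign(p−q)·Δ_{pq} for q ≠ p. Then the ℚ-vector space {w ∈ ℚ^{k+2} : Ωᵗ·w = 0 and w_p = 0} is one-dimensional and is spanned by w^p. -/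
open Finset

/-- The rational vector `w^p`. -/
noncomputable def wQ (k : ℕ) (Ω : Matrix (Fin (k + 2)) (Fin k) ℤ) (p : Fin (k + 2)) :
    Fin (k + 2) → ℚ := fun q =>
  if q = p then 0
  else (((-1) ^ ((p : ℕ) + (q : ℕ)) * Int.sign ((p : ℤ) - (q : ℤ)) * Delta k Ω p q : ℤ) : ℚ)

/- ### Auxiliary lemmas -/

lemma sign_succAbove (k : ℕ) (p : Fin (k+2)) (r : Fin (k+1)) :
    ((-1:ℤ)) ^ ((p:ℕ) + ((p.succAbove r : Fin (k+2)) : ℕ)) *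
      Int.sign ((p:ℤ) - ((p.succAbove r : Fin (k+2)) : ℤ)) = (-1)^((p:ℕ)+(r:ℕ)) := by
  rcases lt_or_ge (Fin.castSucc r) p with h | h
  · rw [Fin.succAbove_of_castSucc_lt _ _ h]
    have h1 : (r:ℕ) < (p:ℕ) := h
    have h2 : Int.sign ((p:ℤ) - ((r:ℕ):ℤ)) = 1 := by
      rw [Int.sign_eq_one_iff_pos]; omega
    simp only [Fin.coe_castSucc]
    rw [h2]; ring
  · rw [Fin.succAbove_of_le_castSucc _ _ h]
    have h1 : (p:ℕ) ≤ (r:ℕ) := h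
    have h2 : Int.sign ((p:ℤ) - (((r:ℕ)+1 : ℕ):ℤ)) = -1 := by
      rw [Int.sign_eq_neg_one_iff_neg]; push_cast; omega
    have h3 : ((r.succ : Fin (k+2)) : ℕ) = (r:ℕ)+1 := rfl
    rw [h3]
    push_cast at h2 ⊢
    have h4 : (p:ℕ) + ((r:ℕ)+1) = ((p:ℕ)+(r:ℕ))+1 := by ring
    rw [h2, h4, pow_succ]
    ring

lemma card_compl_pair {k : ℕ} {p q : Fin (k+2)} (hpq : p ≠ q) :
    ({p, q} : Finset (Fin (k+2)))ᶜ.card = k := by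
  rw [Finset.card_compl, Finset.card_pair hpq]
  simp

lemma delta_succAbove (k : ℕ) (Ω : Matrix (Fin (k + 2)) (Fin k) ℤ) (p : Fin (k+2))
    (r : Fin (k+1)) :
    Delta k Ω p (p.succAbove r) =
      (Ω.submatrix (fun j : Fin k => p.succAbove (r.succAbove j)) id).det := by
  have hq : p ≠ p.succAbove r := Fin.ne_succAbove p r
  have hcard := card_compl_pair hq
  have hf : (fun j : Fin k => p.succAbove (r.succAbove j)) =
      ⇑(({p, p.succAbove r} : Finset (Fin (k+2)))ᶜ.orderEmbOfFin hcard) := by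
    apply Finset.orderEmbOfFin_unique hcard
    · intro x
      simp only [Finset.mem_compl, Finset.mem_insert, Finset.mem_singleton]
      push_neg
      refine ⟨(Fin.succAbove_ne p _), fun h => Fin.succAbove_ne r x ?_⟩
      exact Fin.succAbove_right_injective h
    · exact (Fin.strictMono_succAbove p).comp (Fin.strictMono_succAbove r)
  unfold Delta minorDet
  rw [dif_pos hcard, ← hf]

lemma cofactor_zero (k : ℕ) (A : Matrix (Fin (k+1)) (Fin k) ℤ) (i : Fin k) :
    ∑ r : Fin (k+1), (-1:ℤ)^((r:ℕ) + k) * A r i * (A.submatrix r.succAbove id).det = 0 := by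
  set B : Matrix (Fin (k+1)) (Fin (k+1)) ℤ :=
    A.submatrix id (fun y => Fin.lastCases i id y) with hBdef
  have hB : B.det = 0 := by
    apply Matrix.det_zero_of_column_eq (i := Fin.castSucc i) (j := Fin.last k)
      (Fin.castSucc_lt_last i).ne
    intro x
    simp [hBdef]
  have h2 : ∑ r : Fin (k+1), (-1:ℤ)^((r:ℕ) + k) * A r i * (A.submatrix r.succAbove id).det
      = B.det := by
    rw [Matrix.det_succ_column B (Fin.last k)]
    apply Finset.sum_congr rfl
    intro r _
    have e1 : ((Fin.last k : Fin (k+1)) : ℕ) = k := rfl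
    have e2 : B r (Fin.last k) = A r i := by simp [hBdef]
    have e3 : B.submatrix r.succAbove (Fin.last k).succAbove = A.submatrix r.succAbove id := by
      ext x y
      simp [hBdef, Fin.succAbove_last]
    rw [e2, e3, e1]
  rw [h2, hB]

lemma wZ_ker (k : ℕ) (Ω : Matrix (Fin (k + 2)) (Fin k) ℤ) (p : Fin (k+2)) (i : Fin k) :
    ∑ q : Fin (k+2), Ω q i *
      (if q = p then 0
       else (-1:ℤ)^((p:ℕ)+(q:ℕ)) * Int.sign ((p:ℤ)-(q:ℤ)) * Delta k Ω p q) = 0 := by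
  rw [Fin.sum_univ_succAbove _ p, if_pos rfl, mul_zero, zero_add]
  set A : Matrix (Fin (k+1)) (Fin k) ℤ := Ω.submatrix p.succAbove id with hA
  have key : ∀ r : Fin (k+1),
      Ω (p.succAbove r) i *
        (if p.succAbove r = p then 0
         else (-1:ℤ)^((p:ℕ)+((p.succAbove r : Fin (k+2)):ℕ)) *
           Int.sign ((p:ℤ)-((p.succAbove r : Fin (k+2)):ℤ)) * Delta k Ω p (p.succAbove r))
      = (-1:ℤ)^((p:ℕ)+k) *
          ((-1:ℤ)^((r:ℕ) + k) * A r i * (A.submatrix r.succAbove id).det) := by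
    intro r
    rw [if_neg (Fin.succAbove_ne p r)]
    have h1 := sign_succAbove k p r
    have h2 : A.submatrix r.succAbove id =
        Ω.submatrix (fun j : Fin k => p.succAbove (r.succAbove j)) id := by
      ext x y; simp [hA]
    have h3 : A r i = Ω (p.succAbove r) i := by simp [hA]
    have h4 : (-1:ℤ)^((p:ℕ)+k) * (-1:ℤ)^((r:ℕ)+k) = (-1:ℤ)^((p:ℕ)+(r:ℕ)) := by
      rw [← pow_add]
      have : (p:ℕ)+k+((r:ℕ)+k) = ((p:ℕ)+(r:ℕ)) + 2*k := by ring
      rw [this, pow_add, pow_mul]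
      simp
    rw [delta_succAbove k Ω p r, ← h2, ← h3]
    rw [show A r i * ((-1:ℤ)^((p:ℕ)+((p.succAbove r : Fin (k+2)):ℕ)) *
        Int.sign ((p:ℤ)-((p.succAbove r : Fin (k+2)):ℤ)) * (A.submatrix r.succAbove id).det)
        = ((-1:ℤ)^((p:ℕ)+((p.succAbove r : Fin (k+2)):ℕ)) *
          Int.sign ((p:ℤ)-((p.succAbove r : Fin (k+2)):ℤ))) *
          (A r i * (A.submatrix r.succAbove id).det)
        from by ring, h1, ← h4]
    ring
  rw [Finset.sum_congr rfl (fun r _ => key r), ← Finset.mul_sum, cofactor_zero, mul_zero]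

lemma wQ_ker (k : ℕ) (Ω : Matrix (Fin (k + 2)) (Fin k) ℤ) (p : Fin (k+2)) (i : Fin k) :
    ∑ q : Fin (k+2), ((Ω q i : ℤ) : ℚ) * wQ k Ω p q = 0 := by
  have h := wZ_ker k Ω p i
  calc ∑ q : Fin (k+2), ((Ω q i : ℤ) : ℚ) * wQ k Ω p q
      = ∑ q : Fin (k+2), ((Ω q i *
          (if q = p then 0
           else (-1:ℤ)^((p:ℕ)+(q:ℕ)) * Int.sign ((p:ℤ)-(q:ℤ)) * Delta k Ω p q) : ℤ) : ℚ) := by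
        apply Finset.sum_congr rfl
        intro q _
        unfold wQ
        split <;> push_cast <;> ring
    _ = 0 := by exact_mod_cast congrArg (fun z : ℤ => (z : ℚ)) h
lemma uniq (k : ℕ) (Ω : Matrix (Fin (k + 2)) (Fin k) ℤ) {p q : Fin (k+2)} (hpq : p ≠ q)
    (hΔ : Delta k Ω p q ≠ 0) (w : Fin (k+2) → ℚ)
    (hker : ∀ i : Fin k, ∑ r : Fin (k+2), ((Ω r i : ℤ) : ℚ) * w r = 0)
    (hp : w p = 0) (hq : w q = 0) : w = 0 := by
  have hcard := card_compl_pair hpq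
  set e := ({p, q} : Finset (Fin (k+2)))ᶜ.orderEmbOfFin hcard with he
  set M : Matrix (Fin k) (Fin k) ℚ :=
    (Ω.submatrix (⇑e) id).map ⇑(Int.castRingHom ℚ) with hM
  have hdet : M.det = ((Delta k Ω p q : ℤ) : ℚ) := by
    rw [hM, ← RingHom.mapMatrix_apply, ← RingHom.map_det]
    unfold Delta minorDet
    rw [dif_pos hcard]
    rfl
  have hdet0 : IsUnit M.det := by
    rw [isUnit_iff_ne_zero, hdet]
    exact_mod_cast hΔ
  have himg : Finset.image (⇑e) Finset.univ = ({p, q} : Finset (Fin (k+2)))ᶜ := by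
    apply Finset.coe_injective
    rw [Finset.coe_image, Finset.coe_univ, Set.image_univ, he, Finset.range_orderEmbOfFin]
  set u : Fin k → ℚ := fun a => w (e a) with hu
  have hMu : Matrix.vecMul u M = 0 := by
    funext i
    have hsplit := Finset.sum_add_sum_compl ({p, q} : Finset (Fin (k+2)))
      (fun r => ((Ω r i : ℤ) : ℚ) * w r)
    rw [hker i, Finset.sum_pair hpq, hp, hq, mul_zero, mul_zero, add_zero, zero_add] at hsplit
    have hsum : ∑ a : Fin k, ((Ω (e a) i : ℤ) : ℚ) * w (e a) = 0 := by
      have h2 := Finset.sum_image (g := ⇑e) (s := (Finset.univ : Finset (Fin k)))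
        (f := fun r => ((Ω r i : ℤ) : ℚ) * w r) (fun a _ b _ hab => e.injective hab)
      rw [himg, hsplit] at h2
      exact h2.symm
    show ∑ a, u a * M a i = 0
    rw [← hsum]
    apply Finset.sum_congr rfl
    intro a _
    simp [hM, hu, mul_comm]
  have hu0 : u = 0 := by
    have h1 : Matrix.vecMul u (M * M⁻¹) = Matrix.vecMul (Matrix.vecMul u M) M⁻¹ := by
      rw [Matrix.vecMul_vecMul]
    rw [Matrix.mul_nonsing_inv M hdet0, Matrix.vecMul_one, hMu, Matrix.zero_vecMul] at h1
    exact h1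
  funext r
  by_cases hr : r ∈ ({p, q} : Finset (Fin (k+2)))
  · rcases Finset.mem_insert.mp hr with h | h
    · rw [h]; exact hp
    · rw [Finset.mem_singleton.mp h]; exact hq
  · have : r ∈ Finset.image (⇑e) Finset.univ := by rw [himg]; simpa using hr
    obtain ⟨a, _, rfl⟩ := Finset.mem_image.mp this
    show u a = 0
    rw [hu0]; rfl

/-- If all `Δ_{pq} ≠ 0`, then `{w ∈ ℚ^{k+2} : Ωᵗ w = 0, w_p = 0}` is spanned by the
nonzero vector `w^p` (hence is one-dimensional). -/
theorem kernel_with_zero_coord_spanned_by_wQ (k : ℕ) (hk : 2 ≤ k)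
    (Ω : Matrix (Fin (k + 2)) (Fin k) ℤ)
    (hΔ : ∀ p q : Fin (k + 2), p ≠ q → Delta k Ω p q ≠ 0) (p : Fin (k + 2)) :
    {w : Fin (k + 2) → ℚ |
        (∀ i : Fin k, ∑ q : Fin (k + 2), ((Ω q i : ℤ) : ℚ) * w q = 0) ∧ w p = 0} =
      {w : Fin (k + 2) → ℚ | ∃ c : ℚ, w = c • wQ k Ω p} ∧
    wQ k Ω p ≠ 0 := by
  have hwqne : ∀ q : Fin (k+2), q ≠ p → wQ k Ω p q ≠ 0 := by
    intro q hq
    unfold wQ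
    rw [if_neg hq]
    have h1 : Delta k Ω p q ≠ 0 := hΔ p q (Ne.symm hq)
    have h2 : Int.sign ((p:ℤ) - (q:ℤ)) ≠ 0 := by
      have hne : ((p:ℕ):ℤ) ≠ ((q:ℕ):ℤ) := by
        intro h
        exact hq (Fin.ext (by exact_mod_cast h.symm))
      rcases lt_or_gt_of_ne hne with h | h
      · rw [Int.sign_eq_neg_one_iff_neg.mpr (by omega)]; norm_num
      · rw [Int.sign_eq_one_iff_pos.mpr (by omega)]; norm_num
    have h3 : ((-1:ℤ))^((p:ℕ)+(q:ℕ)) ≠ 0 := pow_ne_zero _ (by norm_num)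
    intro hc
    have hz : ((-1:ℤ))^((p:ℕ)+(q:ℕ)) * Int.sign ((p:ℤ)-(q:ℤ)) * Delta k Ω p q = 0 := by
      exact_mod_cast hc
    rcases mul_eq_zero.mp hz with h | h
    · rcases mul_eq_zero.mp h with h' | h'
      · exact h3 h'
      · exact h2 h'
    · exact h1 h
  obtain ⟨q0, hq0⟩ := exists_ne p
  constructor
  · ext w
    simp only [Set.mem_setOf_eq]
    constructor
    · rintro ⟨hker, hp⟩
      set c : ℚ := w q0 / wQ k Ω p q0 with hc
      refine ⟨c, ?_⟩
      have h0 : w - c • wQ k Ω p = 0 := by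
        apply uniq k Ω (Ne.symm hq0) (hΔ p q0 (Ne.symm hq0))
        · intro i
          have h1 := hker i
          have h2 := wQ_ker k Ω p i
          calc ∑ r : Fin (k+2), ((Ω r i : ℤ) : ℚ) * (w - c • wQ k Ω p) r
              = (∑ r : Fin (k+2), ((Ω r i : ℤ) : ℚ) * w r)
                - c * ∑ r : Fin (k+2), ((Ω r i : ℤ) : ℚ) * wQ k Ω p r := by
                rw [Finset.mul_sum, ← Finset.sum_sub_distrib]
                apply Finset.sum_congr rfl
                intro r _
                simp only [Pi.sub_apply, Pi.smul_apply, smul_eq_mul]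
                ring
            _ = 0 := by rw [h1, h2]; ring
        · show w p - c * wQ k Ω p p = 0
          rw [hp]
          simp [wQ]
        · show w q0 - c * wQ k Ω p q0 = 0
          rw [hc, div_mul_cancel₀ _ (hwqne q0 hq0)]
          ring
      exact sub_eq_zero.mp h0
    · rintro ⟨c, rfl⟩
      constructor
      · intro i
        have h2 := wQ_ker k Ω p i
        calc ∑ r : Fin (k+2), ((Ω r i : ℤ) : ℚ) * (c • wQ k Ω p) r
            = c * ∑ r : Fin (k+2), ((Ω r i : ℤ) : ℚ) * wQ k Ω p r := by
              rw [Finset.mul_sum]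
              apply Finset.sum_congr rfl
              intro r _
              simp only [Pi.smul_apply, smul_eq_mul]
              ring
          _ = 0 := by rw [h2]; ring
      · show c * wQ k Ω p p = 0
        simp [wQ]
  · intro h
    exact hwqne q0 hq0 (by rw [h]; rfl)
end

section
/- For quaternions u, v ∈ ℍ, the equality (star u)·i·u = (star v)·i·v holds if and only if there exists a quaternion z with zero j-component, zero k-component, and ‖z‖ = 1, such that v = z·u. -/
open Finset
open scoped Quaternion

/-- The imaginary unit `i` of the quaternions. -/
def qI : ℍ := ⟨0, 1, 0, 0⟩

/-- A quaternion is a *unit complex* quaternion if its `j`- and `k`-components vanish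
and it has norm `1`. -/
def IsUnitComplexQ (z : ℍ) : Prop := z.imJ = 0 ∧ z.imK = 0 ∧ ‖z‖ = 1

/-!
If `v = z u` then `(star v) i v = (star u) ((star z) i z) u`, and conjugation by a unit
quaternion `z` fixes `i` exactly when `z` commutes with `i`, i.e. when `z` is complex.
Conversely, taking norms in `(star u) i u = (star v) i v` gives `‖u‖ = ‖v‖`, so for `u ≠ 0`
the quotient `z = v u⁻¹` is a unit quaternion with `(star z) i z = i`.
-/

section StarMul

variable {R : Type*}

theorem star_mul_mul_mul_eq [Semigroup R] [StarMul R] (z u a : R) :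
    star (z * u) * a * (z * u) = star u * (star z * a * z) * u := by
  simp only [star_mul, mul_assoc]

theorem Unitary.star_mul_mul_self_eq_iff_commute [Monoid R] [StarMul R] {z : R}
    (hz : z ∈ unitary R) (a : R) : star z * a * z = a ↔ Commute z a := by
  constructor
  · intro h
    calc z * a = z * (star z * a * z) := by rw [h]
      _ = a * z := by rw [← mul_assoc, ← mul_assoc, Unitary.mul_star_self_of_mem hz, one_mul]
  · intro h
    rw [mul_assoc, ← h.eq, ← mul_assoc, Unitary.star_mul_self_of_mem hz, one_mul]

end StarMul

theorem Quaternion.mem_unitary_iff_norm_eq_one {z : ℍ} : z ∈ unitary ℍ ↔ ‖z‖ = 1 := by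
  rw [Unitary.mem_iff, star_mul_self, self_mul_star, and_self, ← coe_one, coe_inj,
    normSq_eq_norm_mul_self, ← sq, pow_eq_one_iff_of_nonneg (norm_nonneg z) two_ne_zero]

@[simp] theorem qI_re : qI.re = 0 := rfl
@[simp] theorem qI_imI : qI.imI = 1 := rfl
@[simp] theorem qI_imJ : qI.imJ = 0 := rfl
@[simp] theorem qI_imK : qI.imK = 0 := rfl

theorem norm_qI : ‖qI‖ = 1 := by
  rw [← pow_eq_one_iff_of_nonneg (norm_nonneg _) two_ne_zero, sq,
    ← Quaternion.normSq_eq_norm_mul_self, Quaternion.normSq_def']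
  simp

theorem norm_star_mul_qI_mul (u : ℍ) : ‖star u * qI * u‖ = ‖u‖ ^ 2 := by
  rw [norm_mul, norm_mul, Quaternion.norm_star, norm_qI, mul_one, sq]

theorem commute_qI_iff {z : ℍ} : Commute z qI ↔ z.imJ = 0 ∧ z.imK = 0 := by
  rw [Commute, SemiconjBy, Quaternion.ext_iff]
  simp only [Quaternion.re_mul, Quaternion.imI_mul, Quaternion.imJ_mul, Quaternion.imK_mul,
    qI_re, qI_imI, qI_imJ, qI_imK]
  constructor
  · rintro ⟨-, -, hJ, hK⟩
    constructor <;> linarith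
  · rintro ⟨hJ, hK⟩
    simp only [hJ, hK]
    norm_num

theorem isUnitComplexQ_iff {z : ℍ} : IsUnitComplexQ z ↔ z ∈ unitary ℍ ∧ Commute z qI := by
  rw [IsUnitComplexQ, Quaternion.mem_unitary_iff_norm_eq_one, commute_qI_iff]
  tauto

/-- `(star u)·i·u = (star v)·i·v` iff `v = z·u` for some unit complex quaternion `z`. -/
theorem star_i_self_eq_iff (u v : ℍ) :
    star u * qI * u = star v * qI * v ↔
      ∃ z : ℍ, z.imJ = 0 ∧ z.imK = 0 ∧ ‖z‖ = 1 ∧ v = z * u := by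
  constructor
  · intro h
    have hnorm : ‖v‖ = ‖u‖ := by
      have := congrArg norm h
      rw [norm_star_mul_qI_mul, norm_star_mul_qI_mul] at this
      exact ((pow_left_inj₀ (norm_nonneg u) (norm_nonneg v) two_ne_zero).1 this).symm
    obtain rfl | hu := eq_or_ne u 0
    · exact ⟨1, rfl, rfl, norm_one, by simpa using hnorm⟩
    set z := v * u⁻¹
    have hv : v = z * u := (inv_mul_cancel_right₀ hu v).symm
    have hz : z ∈ unitary ℍ := by
      rw [Quaternion.mem_unitary_iff_norm_eq_one, norm_mul, norm_inv, hnorm,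
        mul_inv_cancel₀ (norm_ne_zero_iff.2 hu)]
    have hconj : star z * qI * z = qI := by
      rw [hv, star_mul_mul_mul_eq, mul_assoc, mul_assoc (star u)] at h
      exact (mul_right_cancel₀ hu (mul_left_cancel₀ (star_ne_zero.2 hu) h)).symm
    obtain ⟨hj, hk, hz1⟩ :=
      isUnitComplexQ_iff.2 ⟨hz, (Unitary.star_mul_mul_self_eq_iff_commute hz qI).1 hconj⟩
    exact ⟨z, hj, hk, hz1, hv⟩
  · rintro ⟨z, hj, hk, hz, rfl⟩
    obtain ⟨hunit, hcomm⟩ := isUnitComplexQ_iff.1 ⟨hj, hk, hz⟩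
    rw [star_mul_mul_mul_eq, (Unitary.star_mul_mul_self_eq_iff_commute hunit qI).2 hcomm]
end

section
/- Suppose Ω satisfies Condition (*) and let x ∈ N_Ω. (a) If x_p ≠ 0 for all p ∈ {1,…,k+2}, then the only (k+2)-tuple t of unit complex quaternions satisfying t_p·x_p = x_p for all p is the tuple with all entries 1. (b) If x_p = 0 for some p, then a (k+2)-tuple t of unit complex quaternions satisfies t_q·x_q = x_q for all q if and only if t_q = 1 for all q ≠ p. -/
open Finset
open scoped Quaternion

/-- The zero set `N_Ω` of the moment map `μ_Ω`, inside the unit sphere of `ℍ^{k+2}`. -/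
def NOmega (k : ℕ) (Ω : Matrix (Fin (k + 2)) (Fin k) ℤ) : Set (Fin (k + 2) → ℍ) :=
  {x | (∑ p : Fin (k + 2), ‖x p‖ ^ 2 = 1) ∧
    ∀ j : Fin k, ∑ p : Fin (k + 2), star (x p) * qI * x p * ((Ω p j : ℤ) : ℍ) = 0}


lemma qI_ne_zero : qI ≠ 0 := by
  intro h
  have := congrArg QuaternionAlgebra.imI h
  simp [qI] at this

lemma aux_atMostOne (k : ℕ) (Ω : Matrix (Fin (k + 2)) (Fin k) ℤ)
    (hΔ : ∀ p q : Fin (k + 2), p ≠ q → Delta k Ω p q ≠ 0)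
    (x : Fin (k + 2) → ℍ) (hx : x ∈ NOmega k Ω)
    (p q : Fin (k + 2)) (hpq : p ≠ q) (hp : x p = 0) (hq : x q = 0) : False := by
  set s : Finset (Fin (k + 2)) := {p, q} with hs
  have hcard : sᶜ.card = k := by
    rw [Finset.card_compl, Finset.card_pair hpq]
    simp [Fintype.card_fin]
  set e := sᶜ.orderEmbOfFin hcard with he
  have hdet0 : Delta k Ω p q = (Ω.submatrix e id).det := by
    rw [Delta, minorDet, dif_pos hcard]
  have hdne : ((Ω.submatrix e id).det : ℝ) ≠ 0 := by
    rw [← hdet0]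
    exact_mod_cast hΔ p q hpq
  set M : Matrix (Fin k) (Fin k) ℝ := fun i j => ((Ω (e i) j : ℤ) : ℝ) with hM
  have hMdet : M.det ≠ 0 := by
    have : M = (Ω.submatrix e id).map (Int.castRingHom ℝ) := by
      ext i j; simp [hM, Matrix.submatrix, Matrix.map]
    rw [this, ← RingHom.mapMatrix_apply, ← RingHom.map_det]
    simpa using hdne
  have hMinv : IsUnit M.det := isUnit_iff_ne_zero.mpr hMdet
  set a : Fin k → ℍ := fun i => star (x (e i)) * qI * x (e i) with ha
  have hzero : ∀ r ∈ s, x r = 0 := by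
    intro r hr
    rcases Finset.mem_insert.mp hr with h | h
    · rw [h]; exact hp
    · rw [Finset.mem_singleton.mp h]; exact hq
  have hmap : sᶜ = Finset.univ.map e.toEmbedding := by
    apply Finset.eq_of_subset_of_card_le
    · intro r hr
      have : r ∈ Set.range e := by
        rw [he, Finset.range_orderEmbOfFin]
        exact hr
      obtain ⟨i, hi⟩ := this
      exact Finset.mem_map.mpr ⟨i, Finset.mem_univ i, hi⟩
    · simp [hcard]
  have hsum : ∀ j : Fin k, ∑ i : Fin k, (M i j) • a i = 0 := by
    intro j
    have h1 := hx.2 j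
    have h2 : ∑ r ∈ sᶜ, star (x r) * qI * x r * ((Ω r j : ℤ) : ℍ) = 0 := by
      rw [← h1]
      apply Finset.sum_subset (Finset.subset_univ _)
      intro r _ hr
      have : x r = 0 := hzero r (by simpa using hr)
      simp [this]
    rw [hmap, Finset.sum_map] at h2
    simp only [RelEmbedding.coe_toEmbedding] at h2
    rw [← h2]
    apply Finset.sum_congr rfl
    intro i _
    have hcoe : ((Ω (e i) j : ℤ) : ℍ) = ((M i j : ℝ) : ℍ) := by
      rw [hM]; push_cast; ring
    rw [hcoe, Quaternion.mul_coe_eq_smul]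
  have hazero : ∀ l, a l = 0 := by
    intro l
    have key : ∑ j : Fin k, (M⁻¹ j l) • (∑ i : Fin k, (M i j) • a i) = a l := by
      simp only [Finset.smul_sum, smul_smul]
      rw [Finset.sum_comm]
      have hrow : ∀ i, ∑ j : Fin k, (M⁻¹ j l * M i j) • a i = ((M * M⁻¹) i l) • a i := by
        intro i
        rw [← Finset.sum_smul, Matrix.mul_apply]
        congr 1
        exact Finset.sum_congr rfl fun j _ => mul_comm _ _
      simp only [hrow, Matrix.mul_nonsing_inv M hMinv, Matrix.one_apply]
      simp
    rw [← key]
    simp only [hsum, smul_zero, Finset.sum_const_zero]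
  have hxzero : ∀ r, x r = 0 := by
    intro r
    by_cases hr : r ∈ s
    · exact hzero r hr
    · have hr' : r ∈ sᶜ := Finset.mem_compl.mpr hr
      have : r ∈ Set.range e := by rw [he, Finset.range_orderEmbOfFin]; exact hr'
      obtain ⟨i, hi⟩ := this
      have h0 := hazero i
      rw [ha] at h0
      simp only at h0
      rcases mul_eq_zero.mp h0 with h | h
      · rcases mul_eq_zero.mp h with h | h
        · rw [← hi]; simpa using h
        · exact absurd h qI_ne_zero
      · rw [← hi]; exact h
  have := hx.1
  simp only [hxzero, norm_zero] at this
  simp at this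

lemma aux_cancel (t y : ℍ) (hy : y ≠ 0) (h : t * y = y) : t = 1 := by
  have : t * y = 1 * y := by rw [one_mul]; exact h
  exact mul_right_cancel₀ hy this

/-- Stabilisers of the `T^{k+2}`-action on `N_Ω`: points with no zero entry have trivial
stabiliser, and points with `x_p = 0` have stabiliser exactly `T^1_p`. -/
theorem NOmega_stabilizers (k : ℕ) (hk : 2 ≤ k) (Ω : Matrix (Fin (k + 2)) (Fin k) ℤ)
    (hΩ : CondStar k Ω) (x : Fin (k + 2) → ℍ) (hx : x ∈ NOmega k Ω) :
    ((∀ p, x p ≠ 0) →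
      ∀ t : Fin (k + 2) → ℍ, (∀ p, IsUnitComplexQ (t p)) →
        (∀ p, t p * x p = x p) → ∀ p, t p = 1) ∧
    (∀ p : Fin (k + 2), x p = 0 →
      ∀ t : Fin (k + 2) → ℍ, (∀ q, IsUnitComplexQ (t q)) →
        ((∀ q, t q * x q = x q) ↔ ∀ q, q ≠ p → t q = 1)) := by
  refine ⟨fun hxne t ht htx p => aux_cancel _ _ (hxne p) (htx p), fun p hp t ht => ?_⟩
  constructor
  · intro htx q hqp
    apply aux_cancel _ _ _ (htx q)
    intro h0
    exact aux_atMostOne k Ω hΩ.1 x hx q p hqp h0 hp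
  · intro h1 q
    by_cases hq : q = p
    · rw [hq, hp, mul_zero]
    · rw [h1 q hq, one_mul]
end
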